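/- Let ω = (−1+√3 i)/2 and, for λ ∈ ℂ ∖ {0, 1, −ω²}, set N(λ) = 3√3 i · λ(1−λ)/(λ+ω²)³. Then for every λ ∈ ℂ ∖ {0, 1, −ω²}, both 1 − 1/λ and 1/(1−λ) again lie in ℂ ∖ {0, 1, −ω²}, and N(1 − 1/λ) = N(λ) and N(1/(1−λ)) = N(λ); that is, N is invariant under the order-three map σ(λ) = 1 − 1/λ. -/

import Mathlib

open Complex

/-- `ω = (−1 + √3 i)/2`, the primitive cube root of unity in the upper half-plane. -/
noncomputable def omegaC : ℂ := (-1 + Real.sqrt 3 * Complex.I) / 2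

/-- The rational function `N(λ) = 3√3 i λ(1−λ)/(λ+ω²)³`. -/
noncomputable def Nfn (l : ℂ) : ℂ :=
  3 * Real.sqrt 3 * Complex.I * (l * (1 - l)) / (l + omegaC ^ 2) ^ 3

/-!
The Möbius map `σ(λ) = 1 − 1/λ` cycles `0 ↦ ∞ ↦ 1 ↦ 0` and fixes the primitive cube roots of
`-1`, in particular `-ω²`; the key identity is `σ(λ) + ω² = -ω⁴ (λ + ω²)/λ`. Hence `σ` preserves
`ℂ ∖ {0, 1, -ω²}`, and `N ∘ σ = N` by direct substitution, using `ω⁶ = 1`. Since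
`σ(σ(λ)) = 1/(1 − λ)`, invariance under `λ ↦ 1/(1 − λ)` follows by applying `σ` twice.
-/

section MobiusSigma

variable {K : Type*} [Field K]

def mobiusSigma (l : K) : K := 1 - 1 / l

theorem mobiusSigma_mobiusSigma {l : K} (h0 : l ≠ 0) (h1 : l ≠ 1) :
    mobiusSigma (mobiusSigma l) = 1 / (1 - l) := by
  have h1' : l - 1 ≠ 0 := sub_ne_zero.mpr h1
  unfold mobiusSigma
  field_simp
  ring

theorem mobiusSigma_ne_zero {l : K} (h1 : l ≠ 1) : mobiusSigma l ≠ 0 := by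
  unfold mobiusSigma
  intro h
  rw [sub_eq_zero, eq_comm, one_div, inv_eq_one] at h
  exact h1 h

theorem mobiusSigma_ne_one {l : K} (h0 : l ≠ 0) : mobiusSigma l ≠ 1 := by
  simpa [mobiusSigma] using h0

theorem mobiusSigma_add {a l : K} (ha : a ^ 2 + a + 1 = 0) (h0 : l ≠ 0) :
    mobiusSigma l + a = -a ^ 2 * (l + a) / l := by
  unfold mobiusSigma
  field_simp
  linear_combination (l + a - 1) * ha

theorem mobiusSigma_ne_neg {a l : K} (ha : a ^ 2 + a + 1 = 0) (h0 : l ≠ 0) (h2 : l ≠ -a) :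
    mobiusSigma l ≠ -a := by
  have ha0 : a ≠ 0 := by rintro rfl; norm_num at ha
  rw [Ne, ← add_eq_zero_iff_eq_neg, mobiusSigma_add ha h0]
  have : l + a ≠ 0 := fun h => h2 (eq_neg_of_add_eq_zero_left h)
  simp [ha0, h0, this]

theorem div_cube_mobiusSigma {a l : K} (c : K) (ha : a ^ 2 + a + 1 = 0) (h0 : l ≠ 0) :
    c * (mobiusSigma l * (1 - mobiusSigma l)) / (mobiusSigma l + a) ^ 3 =
      c * (l * (1 - l)) / (l + a) ^ 3 := by
  have ha6 : a ^ 6 = 1 := by linear_combination (a ^ 4 - a ^ 3 + a - 1) * ha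
  rw [mobiusSigma_add ha h0]
  by_cases hla : l + a = 0
  · simp [hla]
  have ha0 : a ≠ 0 := by rintro rfl; norm_num at ha
  unfold mobiusSigma
  field_simp
  linear_combination (c * (l - 1)) * ha6

end MobiusSigma

theorem omegaC_sq_add_omegaC_add_one : omegaC ^ 2 + omegaC + 1 = 0 := by
  have h3 : ((Real.sqrt 3 : ℝ) : ℂ) ^ 2 = 3 := by
    rw [← Complex.ofReal_pow, Real.sq_sqrt (by norm_num)]; norm_num
  unfold omegaC
  linear_combination (Complex.I ^ 2 / 4) * h3 + ((3 : ℂ) / 4) * Complex.I_sq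

theorem omegaC_sq_sq_add_omegaC_sq_add_one : (omegaC ^ 2) ^ 2 + omegaC ^ 2 + 1 = 0 := by
  linear_combination (omegaC ^ 2 - omegaC + 1) * omegaC_sq_add_omegaC_add_one

theorem Nfn_mobiusSigma {l : ℂ} (h0 : l ≠ 0) : Nfn (mobiusSigma l) = Nfn l :=
  div_cube_mobiusSigma _ omegaC_sq_sq_add_omegaC_sq_add_one h0

/-- `N` is invariant under the order-three map `σ(λ) = 1 − 1/λ`. -/
theorem N_sigma_invariant (l : ℂ) (h0 : l ≠ 0) (h1 : l ≠ 1) (h2 : l ≠ -omegaC ^ 2) :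
    (1 - 1/l ≠ 0 ∧ 1 - 1/l ≠ 1 ∧ 1 - 1/l ≠ -omegaC ^ 2) ∧
    (1/(1 - l) ≠ 0 ∧ 1/(1 - l) ≠ 1 ∧ 1/(1 - l) ≠ -omegaC ^ 2) ∧
    Nfn (1 - 1/l) = Nfn l ∧ Nfn (1/(1 - l)) = Nfn l := by
  have ha := omegaC_sq_sq_add_omegaC_sq_add_one
  have hσ0 : mobiusSigma l ≠ 0 := mobiusSigma_ne_zero h1
  have hσ1 : mobiusSigma l ≠ 1 := mobiusSigma_ne_one h0
  have hσ2 : mobiusSigma l ≠ -omegaC ^ 2 := mobiusSigma_ne_neg ha h0 h2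
  rw [← mobiusSigma_mobiusSigma h0 h1]
  exact ⟨⟨hσ0, hσ1, hσ2⟩,
    ⟨mobiusSigma_ne_zero hσ1, mobiusSigma_ne_one hσ0, mobiusSigma_ne_neg ha hσ0 hσ2⟩,
    Nfn_mobiusSigma h0, (Nfn_mobiusSigma hσ0).trans (Nfn_mobiusSigma h0)⟩
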